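/- arXiv:1309.2574 — 3 statements merged into one kernel-verified Lean document; each statement's English description precedes it below -/
import Mathlib

section
/- Let P = (1/(n−1))(𝟏𝟏^T − I) and suppose the attractive and repulsive Laplacians satisfy L_att + L_rep = L_{K_n}/(n−1) (the weighted complete-graph Laplacian). Fix α ∈ (0,1]. Then the spectral radius of (I − 𝟏𝟏^T/n)(I − (α/n)L_att + (β/n)L_rep) is less than 1 if and only if β < max{(n/((n−1)λ_max(L_rep)) − 1)α, 0}, and greater than 1 when β exceeds this threshold, where L_rep ≠ 0 is symmetric. -/
/-!
Since `L_att + L_rep` is a multiple of the complete-graph Laplacian `n (1 - J)` and `J L_rep = 0`,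
the centred update collapses to `W = c (1 - J) + t L_rep` with `c = 1 - α/(n-1) ≥ 0` and
`t = (α + β)/n`. As `1 - J` is an orthogonal projection, `0 ≤ W ≤ (c + t λ_max) 1` in the Loewner
order, and a top eigenvector of `L_rep` (orthogonal to `𝟏` because `λ_max > 0`) is an eigenvector
of `W` for `c + t λ_max`. So the spectral radius is `c + t λ_max = 1 + (β - β₀) λ_max / n` with
`β₀ = (n/((n-1) λ_max) - 1) α`, which is below `1` exactly when `β < β₀`.
-/

open Matrix

/-- The spectral radius of a real matrix: the supremum of the absolute values of its
complex eigenvalues. -/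
noncomputable def specRad {n : ℕ} (A : Matrix (Fin n) (Fin n) ℝ) : ℝ :=
  sSup {r : ℝ | ∃ μ ∈ spectrum ℂ (A.map Complex.ofReal), r = ‖μ‖}

open scoped MatrixOrder

namespace Matrix

theorem of_one_mul_eq_zero {ι : Type*} [Fintype ι] {L : Matrix ι ι ℝ} (hL : L.IsSymm)
    (hker : L *ᵥ (fun _ => 1) = 0) : of (fun _ _ : ι => (1 : ℝ)) * L = 0 := by
  ext i j
  simpa [mul_apply, mulVec, dotProduct, hL.apply] using congrFun hker j

theorem isStarProjection_inv_natCast_smul_of_one {n : ℕ} :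
    IsStarProjection ((n : ℝ)⁻¹ • of (fun _ _ : Fin n => (1 : ℝ))) := by
  refine ⟨?_, ?_⟩
  · rcases Nat.eq_zero_or_pos n with rfl | hn
    · exact Subsingleton.elim _ _
    · ext i j
      simp only [smul_of, mul_apply, of_apply, Pi.smul_apply, smul_eq_mul, mul_one,
        Finset.sum_const, Finset.card_univ, Fintype.card_fin, nsmul_eq_mul, smul_apply]
      field_simp
  · ext i j
    simp

variable {ι : Type*} [Fintype ι] [DecidableEq ι]

theorem mem_spectrum_iff_exists_mulVec_eq_smul {K : Type*} [Field K] {A : Matrix ι ι K} {μ : K} :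
    μ ∈ spectrum K A ↔ ∃ v ≠ 0, A *ᵥ v = μ • v := by
  rw [spectrum.mem_iff, isUnit_iff_isUnit_det, isUnit_iff_ne_zero, not_not,
    ← exists_mulVec_eq_zero_iff]
  simp only [Algebra.algebraMap_eq_smul_one, sub_mulVec, smul_mulVec, one_mulVec, sub_eq_zero,
    eq_comm]

theorem ofReal_mem_spectrum_map_ofReal_iff (A : Matrix ι ι ℝ) (μ : ℝ) :
    (μ : ℂ) ∈ spectrum ℂ (A.map Complex.ofReal) ↔ μ ∈ spectrum ℝ A := by
  rw [mem_spectrum_iff_isRoot_charpoly, mem_spectrum_iff_isRoot_charpoly,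
    ← Polynomial.isRoot_map_iff Complex.ofRealHom.injective, ← charpoly_map]
  rfl

theorem IsSymm.spectrum_map_ofReal {A : Matrix ι ι ℝ} (hA : A.IsSymm) :
    spectrum ℂ (A.map Complex.ofReal) = Complex.ofReal '' spectrum ℝ A := by
  have hAc : (A.map Complex.ofReal).IsHermitian := by
    ext i j
    simp [hA.apply i j]
  refine Set.ext fun μ => ⟨fun h => ?_, ?_⟩
  · rw [hAc.spectrum_eq_image_range] at h
    obtain ⟨_, ⟨i, rfl⟩, rfl⟩ := h
    refine ⟨_, (ofReal_mem_spectrum_map_ofReal_iff A _).mp ?_, rfl⟩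
    exact hAc.spectrum_eq_image_range ▸ ⟨_, ⟨i, rfl⟩, rfl⟩
  · rintro ⟨μ, hμ, rfl⟩
    exact (ofReal_mem_spectrum_map_ofReal_iff A μ).mpr hμ

theorem exists_pos_mem_spectrum {A : Matrix ι ι ℝ} (hA : 0 ≤ A) (hne : A ≠ 0) :
    ∃ μ ∈ spectrum ℝ A, 0 < μ := by
  obtain ⟨v, μ, hμ, hv, hAv⟩ := hA.posSemidef.isHermitian.exists_eigenvector_of_ne_zero hne
  have hmem : μ ∈ spectrum ℝ A := mem_spectrum_iff_exists_mulVec_eq_smul.mpr ⟨v, hv, hAv⟩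
  exact ⟨μ, hmem, (spectrum_nonneg_of_nonneg hA hmem).lt_of_ne' hμ⟩

variable {J L : Matrix ι ι ℝ} {c t m : ℝ}

theorem isSelfAdjoint_smul_one_sub_add_smul (hJ : IsStarProjection J) (hL : IsSelfAdjoint L) :
    IsSelfAdjoint (c • (1 - J) + t • L) :=
  ((IsSelfAdjoint.all c).smul ((IsSelfAdjoint.one _).sub hJ.isSelfAdjoint)).add
    ((IsSelfAdjoint.all t).smul hL)

theorem add_mul_mem_spectrum_smul_one_sub_add_smul (hJL : J * L = 0) (hm : m ∈ spectrum ℝ L)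
    (hm0 : m ≠ 0) : c + t * m ∈ spectrum ℝ (c • (1 - J) + t • L) := by
  obtain ⟨v, hv, hLv⟩ := mem_spectrum_iff_exists_mulVec_eq_smul.mp hm
  have hJv : J *ᵥ v = 0 := by
    have : J *ᵥ (L *ᵥ v) = 0 := by rw [mulVec_mulVec, hJL, zero_mulVec]
    rwa [hLv, mulVec_smul, smul_eq_zero, or_iff_right hm0] at this
  refine mem_spectrum_iff_exists_mulVec_eq_smul.mpr ⟨v, hv, ?_⟩
  rw [add_mulVec, smul_mulVec, smul_mulVec, sub_mulVec, one_mulVec, hJv, sub_zero, hLv,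
    add_smul, smul_smul]

theorem spectrum_smul_one_sub_add_smul_subset_Icc (hJ : IsStarProjection J) (hL : 0 ≤ L)
    (hc : 0 ≤ c) (ht : 0 ≤ t) (hLm : ∀ μ ∈ spectrum ℝ L, μ ≤ m) :
    spectrum ℝ (c • (1 - J) + t • L) ⊆ Set.Icc 0 (c + t * m) := by
  have hW0 : 0 ≤ c • (1 - J) + t • L :=
    add_nonneg (smul_nonneg hc hJ.one_sub_nonneg) (smul_nonneg ht hL)
  have hWm : c • (1 - J) + t • L ≤ algebraMap ℝ _ (c + t * m) := by
    have hLm' := le_algebraMap_of_spectrum_le hLm (IsSelfAdjoint.of_nonneg hL)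
    rw [Algebra.algebraMap_eq_smul_one] at hLm' ⊢
    rw [add_smul, mul_smul]
    exact add_le_add (smul_le_smul_of_nonneg_left (sub_le_self 1 hJ.nonneg) hc)
      (smul_le_smul_of_nonneg_left hLm' ht)
  have hW := isSelfAdjoint_smul_one_sub_add_smul (c := c) (t := t) hJ (IsSelfAdjoint.of_nonneg hL)
  exact fun μ hμ =>
    ⟨spectrum_nonneg_of_nonneg hW0 hμ, (le_algebraMap_iff_spectrum_le hW).mp hWm μ hμ⟩

end Matrix

theorem specRad_eq_of_isSymm {n : ℕ} {A : Matrix (Fin n) (Fin n) ℝ} (hA : A.IsSymm) {m : ℝ}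
    (hm : m ∈ spectrum ℝ A) (hle : ∀ μ ∈ spectrum ℝ A, |μ| ≤ m) : specRad A = m := by
  refine IsGreatest.csSup_eq ⟨⟨m, (ofReal_mem_spectrum_map_ofReal_iff A m).mpr hm, ?_⟩, ?_⟩
  · rw [Complex.norm_real, Real.norm_eq_abs, abs_of_nonneg ((abs_nonneg m).trans (hle m hm))]
  · rintro _ ⟨_, hμ, rfl⟩
    rw [hA.spectrum_map_ofReal] at hμ
    obtain ⟨μ, hμ, rfl⟩ := hμ
    simpa using hle μ hμ

theorem specRad_smul_one_sub_add_smul {n : ℕ} {J L : Matrix (Fin n) (Fin n) ℝ} {c t m : ℝ}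
    (hJ : IsStarProjection J) (hJL : J * L = 0) (hL : 0 ≤ L) (hc : 0 ≤ c) (ht : 0 ≤ t)
    (hm : m ∈ spectrum ℝ L) (hm0 : m ≠ 0) (hLm : ∀ μ ∈ spectrum ℝ L, μ ≤ m) :
    specRad (c • (1 - J) + t • L) = c + t * m := by
  have hsub := spectrum_smul_one_sub_add_smul_subset_Icc hJ hL hc ht hLm
  refine specRad_eq_of_isSymm ?_ (add_mul_mem_spectrum_smul_one_sub_add_smul hJL hm hm0)
    fun μ hμ => (abs_of_nonneg (hsub hμ).1).trans_le (hsub hμ).2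
  exact isHermitian_iff_isSymm.mp
    (isSelfAdjoint_smul_one_sub_add_smul hJ (IsSelfAdjoint.of_nonneg hL))

theorem one_sub_mul_update_eq {n : ℕ} (hn : 2 ≤ n) (α β : ℝ)
    {Latt Lrep LK J : Matrix (Fin n) (Fin n) ℝ}
    (hLK : LK = (n : ℝ) • (1 : Matrix (Fin n) (Fin n) ℝ) - of (fun _ _ : Fin n => (1 : ℝ)))
    (hJ : J = (n : ℝ)⁻¹ • of (fun _ _ : Fin n => (1 : ℝ)))
    (hJJ : J * J = J) (hJrep : J * Lrep = 0) (hsum : Latt + Lrep = ((n : ℝ) - 1)⁻¹ • LK) :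
    (1 - J) * (1 - (α / n) • Latt + (β / n) • Lrep)
      = (1 - α / (n - 1)) • (1 - J) + ((α + β) / n) • Lrep := by
  have hn0 : (n : ℝ) ≠ 0 := by positivity
  have hn1 : (n : ℝ) - 1 ≠ 0 := by
    have : (2 : ℝ) ≤ n := by exact_mod_cast hn
    linarith
  have hLatt : Latt = ((n : ℝ) / (n - 1)) • (1 - J) - Lrep := by
    rw [eq_sub_iff_add_eq, hsum, hLK, hJ, smul_sub, smul_sub, smul_smul, smul_smul]
    congr 2 <;> field_simp
  have hPP : (1 - J) * (1 - J) = 1 - J := by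
    rw [sub_mul, mul_sub, mul_sub, hJJ]
    simp
  have hPL : (1 - J) * Lrep = Lrep := by rw [sub_mul, hJrep, one_mul, sub_zero]
  have hcoef : α / n * (n / (n - 1)) = α / (n - 1) := by field_simp
  rw [hLatt, mul_add, mul_sub, mul_one, Matrix.mul_smul, mul_sub, Matrix.mul_smul,
    Matrix.mul_smul, hPP, hPL, smul_sub, smul_smul, hcoef]
  module

theorem one_sub_div_add_div_mul_eq {ν α β l : ℝ} (hν : ν ≠ 0) (hν1 : ν - 1 ≠ 0) (hl : l ≠ 0) :
    1 - α / (ν - 1) + (α + β) / ν * l = 1 + (β - (ν / ((ν - 1) * l) - 1) * α) * (l / ν) := by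
  field_simp
  ring

theorem stmt7_general {n : ℕ} (hn : 3 ≤ n)
    (α β : ℝ) (hα : 0 < α ∧ α ≤ 1) (hβ : 0 ≤ β)
    (Latt Lrep LK J : Matrix (Fin n) (Fin n) ℝ)
    (hLK : LK = (n : ℝ) • (1 : Matrix (Fin n) (Fin n) ℝ)
            - Matrix.of (fun _ _ : Fin n => (1 : ℝ)))
    (hJ : J = (n : ℝ)⁻¹ • Matrix.of (fun _ _ : Fin n => (1 : ℝ)))
    (hrepSymm : Lrep.IsSymm)
    (hrepPSD : ∀ z : Fin n → ℝ, 0 ≤ z ⬝ᵥ (Lrep *ᵥ z))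
    (hrepKer : Lrep *ᵥ (fun _ => 1) = 0)
    (hrepNe : Lrep ≠ 0)
    (hsum : Latt + Lrep = ((n : ℝ) - 1)⁻¹ • LK)
    (lamMaxRep βstar : ℝ)
    (hlam : lamMaxRep = sSup (spectrum ℝ Lrep))
    (hβstar : βstar = max (((n : ℝ) / (((n : ℝ) - 1) * lamMaxRep) - 1) * α) 0) :
    (specRad ((1 - J) * (1 - (α / n) • Latt + (β / n) • Lrep)) < 1 ↔ β < βstar) ∧
    (βstar < β → 1 < specRad ((1 - J) * (1 - (α / n) • Latt + (β / n) • Lrep))) := by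
  obtain ⟨hα0, hα1⟩ := hα
  have hn' : (3 : ℝ) ≤ n := by exact_mod_cast hn
  have hJproj : IsStarProjection J := hJ ▸ isStarProjection_inv_natCast_smul_of_one
  have hJrep : J * Lrep = 0 := by
    rw [hJ, smul_mul, of_one_mul_eq_zero hrepSymm hrepKer, smul_zero]
  have hrep : 0 ≤ Lrep := PosSemidef.nonneg <| .of_dotProduct_mulVec_nonneg
    (isHermitian_iff_isSymm.mpr hrepSymm) (by simpa using hrepPSD)
  obtain ⟨μ, hμ, hμ0⟩ := exists_pos_mem_spectrum hrep hrepNe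
  have hlamMem : lamMaxRep ∈ spectrum ℝ Lrep :=
    hlam ▸ Set.Nonempty.csSup_mem ⟨μ, hμ⟩ finite_real_spectrum
  have hlamMax : ∀ x ∈ spectrum ℝ Lrep, x ≤ lamMaxRep :=
    fun x hx => hlam ▸ le_csSup finite_real_spectrum.bddAbove hx
  have hlamPos : 0 < lamMaxRep := hμ0.trans_le (hlamMax μ hμ)
  have hc : 0 ≤ 1 - α / (n - 1) := by
    rw [sub_nonneg, div_le_one (by linarith)]
    linarith
  have hρ : specRad ((1 - J) * (1 - (α / n) • Latt + (β / n) • Lrep))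
      = 1 + (β - (n / ((n - 1) * lamMaxRep) - 1) * α) * (lamMaxRep / n) := by
    rw [one_sub_mul_update_eq (by omega) α β hLK hJ hJproj.isIdempotentElem hJrep hsum,
      specRad_smul_one_sub_add_smul hJproj hJrep hrep hc (by positivity) hlamMem hlamPos.ne'
        hlamMax,
      one_sub_div_add_div_mul_eq (by positivity) (by linarith) hlamPos.ne']
  have hs : 0 < lamMaxRep / n := by positivity
  rw [hρ, hβstar]
  constructor
  · rw [lt_max_iff, or_iff_left hβ.not_gt]
    constructor <;> intro h <;> nlinarith
  · rw [max_lt_iff]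
    rintro ⟨h, -⟩
    nlinarith

/-- Threshold for the complete graph: let `P = (𝟏𝟏ᵀ − I)/(n−1)` and suppose the attractive
and repulsive Laplacians satisfy `L_att + L_rep = L_{K_n}/(n−1)`, with `L_rep ≠ 0` symmetric
(PSD Laplacian). Fix `α ∈ (0,1]`. Then the spectral radius of
`(I − 𝟏𝟏ᵀ/n)(I − (α/n)L_att + (β/n)L_rep)` is `< 1` iff
`β < β⋆ = max{(n/((n−1)λ_max(L_rep)) − 1)α, 0}`, and is `> 1` when `β > β⋆`. -/
theorem stmt7 {n : ℕ} (hn : 3 ≤ n)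
    (α β : ℝ) (hα : 0 < α ∧ α ≤ 1) (hβ : 0 ≤ β)
    (Latt Lrep LK J : Matrix (Fin n) (Fin n) ℝ)
    (hLK : LK = (n : ℝ) • (1 : Matrix (Fin n) (Fin n) ℝ)
            - Matrix.of (fun _ _ : Fin n => (1 : ℝ)))
    (hJ : J = (n : ℝ)⁻¹ • Matrix.of (fun _ _ : Fin n => (1 : ℝ)))
    (hrepSymm : Lrep.IsSymm)
    (hrepPSD : ∀ z : Fin n → ℝ, 0 ≤ z ⬝ᵥ (Lrep *ᵥ z))
    (hrepKer : Lrep *ᵥ (fun _ => 1) = 0)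
    (hrepNe : Lrep ≠ 0)
    (hattSymm : Latt.IsSymm)
    (hattPSD : ∀ z : Fin n → ℝ, 0 ≤ z ⬝ᵥ (Latt *ᵥ z))
    (hattKer : Latt *ᵥ (fun _ => 1) = 0)
    (hsum : Latt + Lrep = ((n : ℝ) - 1)⁻¹ • LK)
    (lamMaxRep βstar : ℝ)
    (hlam : lamMaxRep = sSup (spectrum ℝ Lrep))
    (hβstar : βstar = max (((n : ℝ) / (((n : ℝ) - 1) * lamMaxRep) - 1) * α) 0) :
    (specRad ((1 - J) * (1 - (α / n) • Latt + (β / n) • Lrep)) < 1 ↔ β < βstar) ∧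
    (βstar < β → 1 < specRad ((1 - J) * (1 - (α / n) • Latt + (β / n) • Lrep))) :=
  stmt7_general hn α β hα hβ Latt Lrep LK J hLK hJ hrepSymm hrepPSD hrepKer hrepNe hsum lamMaxRep
    βstar hlam hβstar
end

section
/- Ring-graph divergence bound: let L_{R_n} be the Laplacian of the ring graph on n ≥ 3 nodes, and let L_rep be the Laplacian of a nonempty subgraph consisting of a single bidirectional edge (so λ_max(L_rep) = 1, here weighted by P = A_{R_n}/2 so that L_rep has largest eigenvalue 1). For W̄ = I − (α/(2n))L_{R_n} + ((α+β)/n)L_rep appearing in the decomposition, the spectral radius of (I − 𝟏𝟏^T/n)W̄ satisfies ρ ≥ 1 + (β − α)/n. In particular ρ > 1 whenever β > α. -/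
/-!
The averaging projection `P = I - 𝟏𝟏ᵀ/n` is a symmetric idempotent, so `P W̄` has the same
nonzero spectrum as the symmetric matrix `P W̄ P`. The edge vector `u = e_i - e_j` is fixed by
`P`, and its Rayleigh quotient for `W̄` is at least `1 + (β - α)/n`: the attractive ring term
costs at most `3α/n` because the adjacency entries lie in `[0, 1]`, while the repulsive edge
gains `(α + β)/n · 2`. Hence `P W̄ P`, and with it `P W̄`, has an eigenvalue at least that large.
-/

open Matrix Real

lemma Matrix.ofReal_mem_spectrum_map {ι : Type*} [Fintype ι] [DecidableEq ι]
    {M : Matrix ι ι ℝ} {t : ℝ} (ht : t ∈ spectrum ℝ M) :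
    (t : ℂ) ∈ spectrum ℂ (M.map Complex.ofReal) := by
  rw [mem_spectrum_iff_isRoot_charpoly] at ht ⊢
  have h := ht.map (f := Complex.ofRealHom)
  rw [← charpoly_map] at h
  exact h

open scoped MatrixOrder in
lemma Matrix.IsSymm.exists_mem_spectrum_dotProduct_mulVec_le {ι : Type*} [Fintype ι]
    [DecidableEq ι] [Nonempty ι] {S : Matrix ι ι ℝ} (hS : S.IsSymm) (u : ι → ℝ) :
    ∃ t ∈ spectrum ℝ S, u ⬝ᵥ (S *ᵥ u) ≤ t * (u ⬝ᵥ u) := by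
  have hS' : S.IsHermitian := isHermitian_iff_isSymm.mpr hS
  obtain ⟨k, hk⟩ := Finite.exists_max hS'.eigenvalues
  refine ⟨hS'.eigenvalues k, hS'.eigenvalues_mem_spectrum_real k, ?_⟩
  have hle : S ≤ algebraMap ℝ _ (hS'.eigenvalues k) := by
    rw [le_algebraMap_iff_spectrum_le hS', hS'.spectrum_real_eq_range_eigenvalues]
    rintro _ ⟨l, rfl⟩
    exact hk l
  have := (Matrix.le_iff.mp hle).dotProduct_mulVec_nonneg u
  rw [star_trivial, sub_mulVec, algebraMap_eq_diagonal] at this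
  simpa [dotProduct_sub, Pi.algebraMap_def] using this

section projection

variable {ι : Type*} [Fintype ι]

lemma Matrix.isIdempotentElem_one_sub_inv_card_smul_ones [DecidableEq ι] [Nonempty ι] :
    IsIdempotentElem (1 - (Fintype.card ι : ℝ)⁻¹ • of fun _ _ : ι => (1 : ℝ)) := by
  refine IsIdempotentElem.one_sub ?_
  ext a b
  simp [mul_apply]

lemma Matrix.isSymm_one_sub_inv_card_smul_ones [DecidableEq ι] :
    (1 - (Fintype.card ι : ℝ)⁻¹ • of fun _ _ : ι => (1 : ℝ)).IsSymm :=
  isSymm_one.sub ((IsSymm.ext fun _ _ => rfl).smul _)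

lemma Matrix.ones_mulVec_eq_zero {u : ι → ℝ} (hu : ∑ a, u a = 0) :
    (of fun _ _ : ι => (1 : ℝ)) *ᵥ u = 0 := by
  funext a
  simp [mulVec, dotProduct, hu]

lemma Matrix.dotProduct_mulVec_mul_mul_of_mulVec_eq {R : Type*} [CommSemiring R]
    {P M : Matrix ι ι R} (hP : P.IsSymm) {u : ι → R} (hu : P *ᵥ u = u) :
    u ⬝ᵥ ((P * M * P) *ᵥ u) = u ⬝ᵥ (M *ᵥ u) := by
  rw [← mulVec_mulVec, ← mulVec_mulVec, hu, dotProduct_mulVec, ← mulVec_transpose, hP.eq, hu]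

end projection

section specRad

variable {n : ℕ}

lemma specRad_nonneg (M : Matrix (Fin n) (Fin n) ℝ) : 0 ≤ specRad M :=
  Real.sSup_nonneg fun _ ⟨_, _, hr⟩ => hr ▸ norm_nonneg _

lemma le_specRad_of_mem_spectrum {M : Matrix (Fin n) (Fin n) ℝ} {t : ℝ}
    (ht : t ∈ spectrum ℝ M) : t ≤ specRad M := by
  have hbdd : BddAbove {r : ℝ | ∃ μ ∈ spectrum ℂ (M.map Complex.ofReal), r = ‖μ‖} := by
    simpa only [Set.image, eq_comm] using
      ((M.map Complex.ofReal).finite_spectrum.image (‖·‖)).bddAbove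
  calc t ≤ ‖(t : ℂ)‖ := by simpa using le_abs_self t
    _ ≤ specRad M := le_csSup hbdd ⟨_, ofReal_mem_spectrum_map ht, rfl⟩

lemma le_specRad_mul_of_mem_spectrum_mul_mul {P S : Matrix (Fin n) (Fin n) ℝ}
    (hP : IsIdempotentElem P) {t : ℝ} (ht : t ∈ spectrum ℝ (P * S * P)) :
    t ≤ specRad (P * S) := by
  rcases eq_or_ne t 0 with rfl | ht0
  · exact specRad_nonneg _
  apply le_specRad_of_mem_spectrum
  have h : spectrum ℝ (P * S * P) \ {0} = spectrum ℝ (P * S) \ {0} := by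
    rw [spectrum.nonzero_mul_comm, ← mul_assoc, hP.eq]
  exact (h ▸ ⟨ht, ht0⟩ : t ∈ spectrum ℝ (P * S) \ {0}).1

lemma dotProduct_mulVec_le_specRad_mul_mul_dotProduct {P W : Matrix (Fin n) (Fin n) ℝ}
    (hP : IsIdempotentElem P) (hPs : P.IsSymm) (hW : W.IsSymm) {u : Fin n → ℝ}
    (hu : P *ᵥ u = u) : u ⬝ᵥ (W *ᵥ u) ≤ specRad (P * W) * (u ⬝ᵥ u) := by
  rcases isEmpty_or_nonempty (Fin n) with _ | _
  · simp [dotProduct]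
  have hS : (P * W * P).IsSymm := by
    rw [IsSymm, transpose_mul, transpose_mul, hPs.eq, hW.eq, mul_assoc]
  obtain ⟨t, ht, hle⟩ := hS.exists_mem_spectrum_dotProduct_mulVec_le u
  rw [dotProduct_mulVec_mul_mul_of_mulVec_eq hPs hu] at hle
  exact hle.trans (mul_le_mul_of_nonneg_right (le_specRad_mul_of_mem_spectrum_mul_mul hP ht)
    (dotProduct_star_self_nonneg u))

end specRad

lemma ite_ite_eq_single_sub_single {ι : Type*} [DecidableEq ι] {i j : ι} (hij : i ≠ j) :
    (fun a => if a = i then (1 : ℝ) else if a = j then -1 else 0) =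
      Pi.single i 1 - Pi.single j 1 := by
  funext a
  rcases eq_or_ne a i with rfl | hai
  · simp [hij]
  · rcases eq_or_ne a j with rfl | haj <;> simp [*]

section twoPoint

variable {ι : Type*} [Fintype ι] [DecidableEq ι]

lemma sum_single_sub_single (i j : ι) :
    ∑ a, (Pi.single i 1 - Pi.single j 1 : ι → ℝ) a = 0 := by
  simp [Finset.sum_sub_distrib]

lemma Matrix.single_sub_single_dotProduct_mulVec {R : Type*} [CommRing R] (M : Matrix ι ι R)
    (i j : ι) :
    (Pi.single i 1 - Pi.single j 1) ⬝ᵥ (M *ᵥ (Pi.single i 1 - Pi.single j 1)) =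
      M i i - M i j - M j i + M j j := by
  simp only [mulVec_sub, sub_dotProduct, dotProduct_sub, single_dotProduct, one_mul,
    mulVec_single_one, col_apply]
  ring

lemma single_sub_single_dotProduct_self {i j : ι} (hij : i ≠ j) :
    (Pi.single i 1 - Pi.single j 1 : ι → ℝ) ⬝ᵥ (Pi.single i 1 - Pi.single j 1) = 2 := by
  simp [dotProduct_sub, hij, hij.symm, one_add_one_eq_two]

lemma le_single_sub_single_dotProduct_mulVec {i j : ι} (hij : i ≠ j) {A : Matrix ι ι ℝ}
    (hA : ∀ a b, 0 ≤ A a b ∧ A a b ≤ 1) {α : ℝ} (hα : 0 ≤ α) (β : ℝ) (n : ℕ) :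
    2 * (1 + (β - α) / n) ≤
      (Pi.single i 1 - Pi.single j 1) ⬝ᵥ
        ((1 - (α / (2 * n)) • ((2 : ℝ) • 1 - A) + ((α + β) / n) • ((2 : ℝ)⁻¹ •
          vecMulVec (Pi.single i 1 - Pi.single j 1) (Pi.single i 1 - Pi.single j 1))) *ᵥ
          (Pi.single i 1 - Pi.single j 1)) := by
  rw [single_sub_single_dotProduct_mulVec]
  simp only [Matrix.add_apply, Matrix.sub_apply, one_apply, ↓reduceIte, Matrix.smul_apply,
    smul_eq_mul, mul_one, vecMulVec_apply, Pi.sub_apply, Pi.single_eq_same, ne_eq, hij, hij.symm, not_false_eq_true,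
    Pi.single_eq_of_ne, sub_zero, mul_zero, zero_sub, mul_neg, sub_neg_eq_add, zero_add, neg_neg]
  have hc : α / (2 * n) = α / n / 2 := by rw [div_div, mul_comm]
  have hx : 0 ≤ α / n := by positivity
  have hA2 : A i j + A j i - A i i - A j j ≤ 2 := by linarith [hA i j, hA j i, hA i i, hA j j]
  rw [hc, add_div, sub_div]
  linarith [mul_le_mul_of_nonneg_left hA2 hx]

end twoPoint

theorem stmt9_general {n : ℕ}
    (α β : ℝ) (hα : 0 ≤ α ∧ α ≤ 1)
    (i j : Fin n) (hij : i ≠ j)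
    (A LRn Lrep J W : Matrix (Fin n) (Fin n) ℝ)
    (hA : ∀ a b : Fin n, A a b =
      (if (b : ℕ) = ((a : ℕ) + 1) % n ∨ (a : ℕ) = ((b : ℕ) + 1) % n then (1:ℝ) else 0))
    (hLRn : LRn = (2 : ℝ) • (1 : Matrix (Fin n) (Fin n) ℝ) - A)
    (hLrep : Lrep = (2 : ℝ)⁻¹ •
      Matrix.vecMulVec (fun a => if a = i then (1:ℝ) else if a = j then -1 else 0)
        (fun a => if a = i then (1:ℝ) else if a = j then -1 else 0))
    (hJ : J = (n : ℝ)⁻¹ • Matrix.of (fun _ _ : Fin n => (1 : ℝ)))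
    (hW : W = 1 - (α / (2 * n)) • LRn + ((α + β) / n) • Lrep) :
    1 + (β - α) / n ≤ specRad ((1 - J) * W) ∧
    (α < β → 1 < specRad ((1 - J) * W)) := by
  subst hLRn hLrep hJ
  rw [ite_ite_eq_single_sub_single hij] at hW
  set u : Fin n → ℝ := Pi.single i 1 - Pi.single j 1
  set P : Matrix (Fin n) (Fin n) ℝ := 1 - (n : ℝ)⁻¹ • of fun _ _ => 1
  have : Nonempty (Fin n) := ⟨i⟩
  have hP : IsIdempotentElem P := by
    simpa only [Fintype.card_fin] using isIdempotentElem_one_sub_inv_card_smul_ones (ι := Fin n)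
  have hPs : P.IsSymm := by
    simpa only [Fintype.card_fin] using isSymm_one_sub_inv_card_smul_ones (ι := Fin n)
  have hPu : P *ᵥ u = u := by
    rw [sub_mulVec, one_mulVec, smul_mulVec, ones_mulVec_eq_zero (sum_single_sub_single i j),
      smul_zero, sub_zero]
  have hWs : W.IsSymm := by
    have hAs : A.IsSymm := IsSymm.ext fun a b => by simp only [hA, or_comm]
    have hus : (vecMulVec u u).IsSymm := IsSymm.ext fun a b => mul_comm _ _
    rw [hW]
    exact isSymm_one.sub (((isSymm_one.smul _).sub hAs).smul _) |>.add ((hus.smul _).smul _)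
  have hq : 2 * (1 + (β - α) / n) ≤ u ⬝ᵥ (W *ᵥ u) := by
    rw [hW]
    refine le_single_sub_single_dotProduct_mulVec hij (fun a b => ?_) hα.1 β n
    rw [hA]
    split_ifs <;> norm_num
  have hρ := dotProduct_mulVec_le_specRad_mul_mul_dotProduct hP hPs hWs hPu
  rw [show u ⬝ᵥ u = 2 from single_sub_single_dotProduct_self hij] at hρ
  have hn : (0 : ℝ) < n := by exact_mod_cast i.pos
  refine ⟨by linarith, fun hαβ => ?_⟩
  linarith [div_pos (sub_pos.mpr hαβ) hn]

/-- Ring-graph divergence bound: let `L_{R_n}` be the Laplacian of the ring graph on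
`n ≥ 3` nodes and let `L_rep = (1/2)(e_i − e_j)(e_i − e_j)ᵀ` be the Laplacian of a single
bidirectional repulsive edge weighted by `P = A_{R_n}/2` (so `λ_max(L_rep) = 1`). For
`W̄ = I − (α/(2n))L_{R_n} + ((α+β)/n)L_rep`, the spectral radius of `(I − 𝟏𝟏ᵀ/n)W̄`
is at least `1 + (β − α)/n`; in particular it exceeds `1` whenever `β > α`. -/
theorem stmt9 {n : ℕ} (hn : 3 ≤ n)
    (α β : ℝ) (hα : 0 ≤ α ∧ α ≤ 1) (hβ : 0 ≤ β)
    (i j : Fin n) (hij : i ≠ j)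
    (A LRn Lrep J W : Matrix (Fin n) (Fin n) ℝ)
    (hA : ∀ a b : Fin n, A a b =
      (if (b : ℕ) = ((a : ℕ) + 1) % n ∨ (a : ℕ) = ((b : ℕ) + 1) % n then (1:ℝ) else 0))
    (hLRn : LRn = (2 : ℝ) • (1 : Matrix (Fin n) (Fin n) ℝ) - A)
    (hLrep : Lrep = (2 : ℝ)⁻¹ •
      Matrix.vecMulVec (fun a => if a = i then (1:ℝ) else if a = j then -1 else 0)
        (fun a => if a = i then (1:ℝ) else if a = j then -1 else 0))
    (hJ : J = (n : ℝ)⁻¹ • Matrix.of (fun _ _ : Fin n => (1 : ℝ)))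
    (hW : W = 1 - (α / (2 * n)) • LRn + ((α + β) / n) • Lrep) :
    1 + (β - α) / n ≤ specRad ((1 - J) * W) ∧
    (α < β → 1 < specRad ((1 - J) * W)) :=
  stmt9_general α β hα i j hij A LRn Lrep J W hA hLRn hLrep hJ hW
end

section
/- Let K > 0 and let M_K be a family of commuting n×n real matrices with entries bounded by K in absolute value. Then for any ε > 0 there exists a matrix norm ‖·‖⋆ (submultiplicative norm on ℝ^{n×n}) such that ρ(A) ≤ ‖A‖⋆ ≤ ρ(A) + ε for all A ∈ M_K, where ρ denotes the spectral radius. -/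
/-!
Commuting complex matrices are simultaneously upper triangularizable: a common eigenvector of the
transposes is a functional whose kernel is invariant under the whole family, and one inducts on
the dimension. If `T = P⁻¹AP` is upper triangular, conjugating further by `D_t = diag(t^i)`
multiplies the entry `(i, j)` by `t^(i-j)`: the diagonal, which lists the eigenvalues of `A`, is
unchanged, and the strictly upper part shrinks by a factor at least `t`. Hence the ℓ∞ operator
norm of `D_t P⁻¹ A P D_t⁻¹` lies between `ρ(A)` and `ρ(A) + ‖P⁻¹AP‖ / t`. The entry bound `K`
bounds `‖P⁻¹AP‖` uniformly on the family, so a single `t` works for every `A`.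
-/

open Matrix

open Module

attribute [local instance] Matrix.linftyOpSeminormedAddCommGroup Matrix.linftyOpNormedRing
  Matrix.linftyOpNormedAlgebra

theorem Module.Basis.repr_mkFinSnoc_coe {R M : Type*} [Ring R] [AddCommGroup M]
    [Module R M] {n : ℕ} {N : Submodule R M} (b : Basis (Fin n) R N) (y : M)
    (hli : ∀ (c : R), ∀ x ∈ N, c • y + x = 0 → c = 0) (hsp : ∀ z : M, ∃ c : R, z + c • y ∈ N)
    (x : N) : ⇑((b.mkFinSnoc y hli hsp).repr x) = Fin.snoc (⇑(b.repr x)) 0 := by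
  have hx : (x : M) = ∑ k, b.repr x k • (b k : M) := by exact_mod_cast (b.sum_repr x).symm
  have hb : ∀ k, (b k : M) = b.mkFinSnoc y hli hsp k.castSucc := by simp
  ext i
  simp only [hx, hb, map_sum, map_smul, Basis.repr_self, Finsupp.coe_finsetSum, Finset.sum_apply,
    Finsupp.smul_apply, Finsupp.single_apply, smul_eq_mul, mul_ite, mul_one, mul_zero]
  induction i using Fin.lastCases with
  | last => simp
  | cast i => simp

namespace Module.End

variable {K V : Type*} [Field K] [IsAlgClosed K] [AddCommGroup V] [Module K V]
  [FiniteDimensional K V]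

theorem exists_common_eigenvector [Nontrivial V] (S : Set (End K V))
    (hS : ∀ f ∈ S, ∀ g ∈ S, Commute f g) :
    ∃ v : V, v ≠ 0 ∧ ∀ f ∈ S, ∃ c : K, f v = c • v := by
  -- A minimal nonzero `S`-invariant subspace contains an eigenvector of each `f ∈ S`, and the
  -- corresponding eigenspace is again `S`-invariant, so `f` is scalar on it.
  let P : Set (Submodule K V) := {W | W ≠ ⊥ ∧ ∀ g ∈ S, W ≤ W.comap g}
  obtain ⟨W, ⟨hW, hWS⟩, hmin⟩ := wellFounded_lt.has_min P ⟨⊤, top_ne_bot, fun _ _ => le_top⟩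
  have hscalar : ∀ f ∈ S, ∃ c : K, W ≤ f.eigenspace c := by
    intro f hf
    have : Nontrivial W := Submodule.nontrivial_iff_ne_bot.mpr hW
    obtain ⟨c, hc⟩ := exists_eigenvalue (f.restrict (hWS f hf))
    obtain ⟨w, hw⟩ := hc.exists_hasEigenvector
    refine ⟨c, ?_⟩
    by_contra hle
    refine hmin (W ⊓ f.eigenspace c) ⟨?_, ?_⟩ (inf_le_left.lt_of_ne fun h => hle (h ▸ inf_le_right))
    · rw [Submodule.ne_bot_iff]
      refine ⟨w, ⟨w.2, mem_eigenspace_iff.mpr ?_⟩, by simpa using hw.2⟩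
      simpa [Subtype.ext_iff] using hw.apply_eq_smul
    · rintro g hg x ⟨hxW, hxE⟩
      exact ⟨hWS g hg hxW, mapsTo_genEigenspace_of_comm (hS f hf g hg) c 1 hxE⟩
  obtain ⟨w, hwW, hw0⟩ := Submodule.exists_mem_ne_zero_of_ne_bot hW
  choose c hc using hscalar
  exact ⟨w, hw0, fun f hf => ⟨c f hf, mem_eigenspace_iff.mp (hc f hf hwW)⟩⟩

theorem exists_basis_toMatrix_isUpperTriangular (S : Set (End K V))
    (hS : ∀ f ∈ S, ∀ g ∈ S, Commute f g) :
    ∃ (m : ℕ) (b : Basis (Fin m) K V), ∀ f ∈ S, (LinearMap.toMatrix b b f).IsUpperTriangular := by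
  induction hd : finrank K V using Nat.strong_induction_on generalizing V with
  | _ d ih =>
  rcases subsingleton_or_nontrivial V with hV | hV
  · exact ⟨0, Basis.empty V, fun _ _ i => i.elim0⟩
  -- A common eigenvector of the transposes is a functional whose kernel is `S`-invariant.
  obtain ⟨φ, hφ0, hφ⟩ := exists_common_eigenvector (LinearMap.dualMap '' S) <| by
    rintro _ ⟨f, hf, rfl⟩ _ ⟨g, hg, rfl⟩
    ext φ x
    simpa using congrArg φ (LinearMap.congr_fun (hS f hf g hg).eq x).symm
  set N := LinearMap.ker φ
  have hN : ∀ f ∈ S, ∀ x ∈ N, f x ∈ N := by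
    intro f hf x hx
    obtain ⟨c, hc⟩ := hφ _ ⟨f, hf, rfl⟩
    change φ (f x) = 0
    simpa [show φ x = 0 from hx] using LinearMap.congr_fun hc x
  set S' : Set (End K N) := {g | ∃ f ∈ S, ∀ x : N, (g x : V) = f x}
  have hS' : ∀ f ∈ S', ∀ g ∈ S', Commute f g := by
    rintro g₁ ⟨f₁, hf₁, h₁⟩ g₂ ⟨f₂, hf₂, h₂⟩
    ext x
    simpa [h₁, h₂] using LinearMap.congr_fun (hS f₁ hf₁ f₂ hf₂).eq x
  obtain ⟨m, b, hb⟩ := ih _ (hd ▸ Submodule.finrank_lt (by simpa [N] using hφ0)) S' hS' rfl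
  obtain ⟨y, hy⟩ : ∃ y, φ y ≠ 0 := by
    by_contra! h
    exact hφ0 (LinearMap.ext h)
  have hli : ∀ c : K, ∀ x ∈ N, c • y + x = 0 → c = 0 := by
    intro c x hx h
    simpa [hy, show φ x = 0 from hx] using congrArg φ h
  have hsp : ∀ z : V, ∃ c : K, z + c • y ∈ N := fun z =>
    ⟨-(φ z / φ y), by simp [N, div_mul_cancel₀ _ hy]⟩
  refine ⟨m + 1, b.mkFinSnoc y hli hsp, fun f hf i j hji => ?_⟩
  obtain ⟨j, rfl⟩ := Fin.exists_castSucc_eq.mpr (Fin.ne_last_of_lt hji)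
  let g : End K N := f.restrict (hN f hf)
  have hg : g ∈ S' := ⟨f, hf, fun _ => rfl⟩
  have hfb : f ((b.mkFinSnoc y hli hsp) j.castSucc) = (g (b j) : V) := by simp [g]
  rw [LinearMap.toMatrix_apply, hfb, b.repr_mkFinSnoc_coe]
  induction i using Fin.lastCases with
  | last => simp
  | cast i => simpa [LinearMap.toMatrix_apply] using hb g hg (Fin.castSucc_lt_castSucc_iff.mp hji)

end Module.End

theorem Matrix.IsUpperTriangular.spectrum_eq {K ι : Type*} [Field K] [Fintype ι] [DecidableEq ι]
    [LinearOrder ι] {T : Matrix ι ι K} (hT : T.IsUpperTriangular) :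
    spectrum K T = Set.range T.diag := by
  ext μ
  rw [mem_spectrum_iff_isRoot_charpoly, charpoly_of_isUpperTriangular T hT, Polynomial.IsRoot,
    Polynomial.eval_prod, Finset.prod_eq_zero_iff]
  simp [sub_eq_zero, eq_comm]

theorem specRad_eq_iSup_norm_diag {n m : ℕ} (A : Matrix (Fin n) (Fin n) ℝ)
    (Φ : Matrix (Fin n) (Fin n) ℂ ≃ₐ[ℂ] Matrix (Fin m) (Fin m) ℂ)
    (hT : (Φ (A.map Complex.ofReal)).IsUpperTriangular) :
    specRad A = ⨆ i, ‖Φ (A.map Complex.ofReal) i i‖ := by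
  rw [specRad, ← AlgEquiv.spectrum_eq Φ, hT.spectrum_eq, iSup]
  congr 1
  ext r
  simp [eq_comm]

theorem Matrix.linfty_opNorm_le_iff {m n α : Type*} [Fintype m] [Fintype n]
    [SeminormedAddCommGroup α] {A : Matrix m n α} {r : ℝ} (hr : 0 ≤ r) :
    ‖A‖ ≤ r ↔ ∀ i, ∑ j, ‖A i j‖ ≤ r := by
  change ‖fun i => WithLp.toLp 1 (A i)‖ ≤ r ↔ _
  simp [pi_norm_le_iff_of_nonneg hr, PiLp.norm_eq_of_L1]

theorem Matrix.norm_apply_le_linfty_opNorm {m n α : Type*} [Fintype m] [Fintype n]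
    [SeminormedAddCommGroup α] (A : Matrix m n α) (i : m) (j : n) : ‖A i j‖ ≤ ‖A‖ :=
  (Finset.single_le_sum (fun k _ => norm_nonneg (A i k)) (Finset.mem_univ j)).trans
    ((linfty_opNorm_le_iff (norm_nonneg A)).mp le_rfl i)

theorem Matrix.linfty_opNorm_le_of_norm_apply_le {m n α : Type*} [Fintype m] [Fintype n]
    [SeminormedAddCommGroup α] {A : Matrix m n α} {K : ℝ} (hK : 0 ≤ K)
    (hA : ∀ i j, ‖A i j‖ ≤ K) : ‖A‖ ≤ Fintype.card n * K :=
  (linfty_opNorm_le_iff (by positivity)).mpr fun i =>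
    (Finset.sum_le_sum fun j _ => hA i j).trans_eq (by simp)

theorem exists_forall_norm_le_of_abs_apply_le {n m : ℕ}
    (Φ : Matrix (Fin n) (Fin n) ℂ →ₗ[ℂ] Matrix (Fin m) (Fin m) ℂ) {K : ℝ} (hK : 0 ≤ K) :
    ∃ C, ∀ A : Matrix (Fin n) (Fin n) ℝ, (∀ i j, |A i j| ≤ K) →
      ‖Φ (A.map Complex.ofReal)‖ ≤ C := by
  obtain ⟨L, hL0, hL⟩ := (LinearMap.toContinuousLinearMap Φ).bound
  refine ⟨L * (n * K), fun A hA => (hL _).trans (mul_le_mul_of_nonneg_left ?_ hL0.le)⟩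
  simpa using linfty_opNorm_le_of_norm_apply_le (A := A.map Complex.ofReal) hK fun i j => by
    simpa using hA i j

theorem LinearMap.toMatrix_unitsSMul_apply {R M ι : Type*} [CommRing R] [AddCommGroup M]
    [Module R M] [Fintype ι] [DecidableEq ι] (b : Basis ι R M) (w : ι → Rˣ) (f : M →ₗ[R] M)
    (i j : ι) :
    toMatrix (b.unitsSMul w) (b.unitsSMul w) f i j = ↑((w i)⁻¹ * w j) * toMatrix b b f i j := by
  simp only [toMatrix_apply, Basis.unitsSMul_apply, Basis.repr_unitsSMul, map_smul,
    Finsupp.smul_apply, Units.smul_def, smul_eq_mul, Units.val_mul]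
  ring

-- Change of basis by the scaling `D_t = diag(t^i)` of the paper, with `u = t`.
noncomputable def Module.Basis.geomRescale {K V : Type*} [Field K] [AddCommGroup V] [Module K V]
    {m : ℕ} (b : Basis (Fin m) K V) (u : Kˣ) : Basis (Fin m) K V :=
  b.unitsSMul fun i => u ^ (-(i : ℤ))

theorem LinearMap.toMatrix_geomRescale_apply {K V : Type*} [Field K] [AddCommGroup V]
    [Module K V] {m : ℕ} (b : Basis (Fin m) K V) (u : Kˣ) (f : V →ₗ[K] V) (i j : Fin m) :
    toMatrix (b.geomRescale u) (b.geomRescale u) f i j =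
      (u : K) ^ ((i : ℤ) - j) * toMatrix b b f i j := by
  rw [Basis.geomRescale, toMatrix_unitsSMul_apply, ← _root_.zpow_neg, ← _root_.zpow_add, neg_neg,
    Units.val_zpow_eq_zpow_val, sub_eq_add_neg]

theorem Matrix.iSup_norm_diag_le_linfty_opNorm {m α : Type*} [Fintype m]
    [SeminormedAddCommGroup α] {T S : Matrix m m α}
    (hS : ∀ i, S i i = T i i) : ⨆ i, ‖T i i‖ ≤ ‖S‖ :=
  Real.iSup_le (fun i => hS i ▸ norm_apply_le_linfty_opNorm S i i) (norm_nonneg S)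

theorem Matrix.IsUpperTriangular.linfty_opNorm_rescale_le {m : ℕ} {T S : Matrix (Fin m) (Fin m) ℂ}
    (hT : T.IsUpperTriangular) {t : ℝ} (ht : 1 ≤ t)
    (hS : ∀ i j, S i j = (t : ℂ) ^ ((i : ℤ) - j) * T i j) :
    ‖S‖ ≤ (⨆ i, ‖T i i‖) + ‖T‖ / t := by
  have ht0 : 0 < t := one_pos.trans_le ht
  have hnorm : ∀ i j, ‖S i j‖ = t ^ ((i : ℤ) - j) * ‖T i j‖ := fun i j => by
    rw [hS, norm_mul, norm_zpow, Complex.norm_real, Real.norm_of_nonneg ht0.le]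
  have hoff : ∀ i j, j ≠ i → ‖S i j‖ ≤ ‖T i j‖ / t := by
    intro i j hji
    rcases hji.lt_or_gt with hlt | hgt
    · simp [hS, hT hlt]
    · rw [hnorm, div_eq_inv_mul, ← _root_.zpow_neg_one]
      exact mul_le_mul_of_nonneg_right (zpow_le_zpow_right₀ ht (by omega)) (norm_nonneg _)
  refine (linfty_opNorm_le_iff (add_nonneg (Real.iSup_nonneg fun i => norm_nonneg _)
    (by positivity))).mpr fun i => ?_
  rw [← Finset.add_sum_erase _ _ (Finset.mem_univ i)]
  gcongr
  · rw [hnorm, sub_self, zpow_zero, one_mul]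
    exact le_ciSup (f := fun i => ‖T i i‖) (Set.finite_range _).bddAbove i
  · calc ∑ j ∈ Finset.univ.erase i, ‖S i j‖
        ≤ ∑ j ∈ Finset.univ.erase i, ‖T i j‖ / t :=
          Finset.sum_le_sum fun j hj => hoff i j (Finset.ne_of_mem_erase hj)
      _ ≤ ∑ j, ‖T i j‖ / t :=
          Finset.sum_le_sum_of_subset_of_nonneg (Finset.erase_subset _ _) fun _ _ _ => by positivity
      _ ≤ ‖T‖ / t := by
          rw [← Finset.sum_div]
          gcongr
          exact (linfty_opNorm_le_iff (norm_nonneg T)).mp le_rfl i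

theorem specRad_le_and_le_of_isUpperTriangular {n m : ℕ} (A : Matrix (Fin n) (Fin n) ℝ)
    (b : Basis (Fin m) ℂ (Fin n → ℂ))
    (hT : (LinearMap.toMatrix b b (toLinAlgEquiv' (A.map Complex.ofReal))).IsUpperTriangular)
    {u : ℂˣ} {t : ℝ} (hu : (u : ℂ) = t) (ht : 1 ≤ t) :
    specRad A ≤ ‖LinearMap.toMatrix (b.geomRescale u) (b.geomRescale u)
        (toLinAlgEquiv' (A.map Complex.ofReal))‖ ∧
      ‖LinearMap.toMatrix (b.geomRescale u) (b.geomRescale u)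
          (toLinAlgEquiv' (A.map Complex.ofReal))‖ ≤
        specRad A + ‖LinearMap.toMatrix b b (toLinAlgEquiv' (A.map Complex.ofReal))‖ / t := by
  have hS := LinearMap.toMatrix_geomRescale_apply b u (toLinAlgEquiv' (A.map Complex.ofReal))
  rw [hu] at hS
  rw [specRad_eq_iSup_norm_diag A (toLinAlgEquiv'.trans (LinearMap.toMatrixAlgEquiv b)) hT]
  exact ⟨iSup_norm_diag_le_linfty_opNorm fun i =>
    (hS i i).trans (by rw [sub_self, zpow_zero, one_mul]; rfl), hT.linfty_opNorm_rescale_le ht hS⟩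

def IsSubmultiplicativeNorm {A : Type*} [Ring A] [Module ℝ A] (N : A → ℝ) : Prop :=
  (∀ X, 0 ≤ N X) ∧ (∀ X, N X = 0 ↔ X = 0) ∧ (∀ (c : ℝ) X, N (c • X) = |c| * N X) ∧
    (∀ X Y, N (X + Y) ≤ N X + N Y) ∧ ∀ X Y, N (X * Y) ≤ N X * N Y

theorem AlgHom.isSubmultiplicativeNorm_norm_comp {A B : Type*} [Ring A] [Algebra ℝ A]
    [NormedRing B] [NormedAlgebra ℝ B] (ψ : A →ₐ[ℝ] B) (hψ : Function.Injective ψ) :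
    IsSubmultiplicativeNorm fun X => ‖ψ X‖ :=
  ⟨fun _ => norm_nonneg _,
    fun X => by rw [norm_eq_zero, map_eq_zero_iff ψ hψ],
    fun c X => by simp only [map_smul, norm_smul, Real.norm_eq_abs],
    fun X Y => by simpa only [map_add] using norm_add_le _ _,
    fun X Y => by simpa only [map_mul] using norm_mul_le _ _⟩

/-- For a commuting family `M_K` of `n×n` real matrices with entries bounded by `K`, and
any `ε > 0`, there is a (submultiplicative) matrix norm `‖·‖⋆` with
`ρ(A) ≤ ‖A‖⋆ ≤ ρ(A) + ε` for every `A ∈ M_K`. -/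
theorem stmt14 {n : ℕ} (K : ℝ) (hK : 0 < K)
    (Mfam : Set (Matrix (Fin n) (Fin n) ℝ))
    (hbd : ∀ M ∈ Mfam, ∀ i j, |M i j| ≤ K)
    (hcomm : ∀ M₁ ∈ Mfam, ∀ M₂ ∈ Mfam, M₁ * M₂ = M₂ * M₁)
    (ε : ℝ) (hε : 0 < ε) :
    ∃ N : Matrix (Fin n) (Fin n) ℝ → ℝ,
      (∀ X, 0 ≤ N X) ∧
      (∀ X, N X = 0 ↔ X = 0) ∧
      (∀ (c : ℝ) (X), N (c • X) = |c| * N X) ∧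
      (∀ X Y, N (X + Y) ≤ N X + N Y) ∧
      (∀ X Y, N (X * Y) ≤ N X * N Y) ∧
      (∀ A ∈ Mfam, specRad A ≤ N A ∧ N A ≤ specRad A + ε) := by
  let ι : Matrix (Fin n) (Fin n) ℝ →ₐ[ℝ] Matrix (Fin n) (Fin n) ℂ := (Algebra.ofId ℝ ℂ).mapMatrix
  obtain ⟨m, b, hb⟩ := End.exists_basis_toMatrix_isUpperTriangular
    ((fun A => toLinAlgEquiv' (ι A)) '' Mfam) <| by
      rintro _ ⟨A, hA, rfl⟩ _ ⟨B, hB, rfl⟩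
      exact ((show Commute A B from hcomm A hA B hB).map ι).map toLinAlgEquiv'
  obtain ⟨C, hC⟩ := exists_forall_norm_le_of_abs_apply_le
    ((LinearMap.toMatrix b b).toLinearMap ∘ₗ toLinAlgEquiv'.toLinearMap) hK.le
  set t := max 1 (C / ε)
  have ht : 0 < t := one_pos.trans_le (le_max_left _ _)
  let u : ℂˣ := Units.mk0 t (by exact_mod_cast ht.ne')
  let e := (toLinAlgEquiv'.trans (LinearMap.toMatrixAlgEquiv (b.geomRescale u))).restrictScalars ℝ
  let ψ : Matrix (Fin n) (Fin n) ℝ →ₐ[ℝ] Matrix (Fin m) (Fin m) ℂ := e.toAlgHom.comp ι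
  obtain ⟨h₀, h₁, h₂, h₃, h₄⟩ := ψ.isSubmultiplicativeNorm_norm_comp
    fun X Y h => map_injective Complex.ofReal_injective (e.injective h)
  refine ⟨fun X => ‖ψ X‖, h₀, h₁, h₂, h₃, h₄, fun A hA => ?_⟩
  obtain ⟨hlow, hup⟩ := specRad_le_and_le_of_isUpperTriangular A b (hb _ ⟨A, hA, rfl⟩)
    (Units.val_mk0 _) (le_max_left _ _)
  refine ⟨hlow, hup.trans (add_le_add le_rfl ?_)⟩
  calc _ ≤ C / t := by gcongr; exact hC A (hbd A hA)
    _ ≤ ε := (div_le_iff₀ ht).mpr (by linarith [(div_le_iff₀ hε).mp (le_max_right 1 (C / ε))])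
end
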